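/- Let ℓ ≥ 3 be a fixed integer. For every integer k ≥ 1 and every even integer b ≥ ℓ, there exists a finite simple graph G on n = (2k+1)·b/2 vertices with exactly m = k·C(b,2) + k·b²/2 edges such that the edge set of G can be partitioned into at most b subsets each forming an acyclic subgraph (a forest) on the vertex set of G, and the number of complete subgraphs of G on ℓ vertices is at least k·C(b,ℓ) + k·C(b,ℓ−1)·(b/2). -/

import Mathlib

/-!
Write `b = 2c` and take `k` disjoint copies of `K_b`, all joined to an independent set `S` of
`c` further vertices. Every `ℓ`-subset of a copy is a clique, and so is every `(ℓ-1)`-subset of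
a copy together with a vertex of `S`; this gives the clique count. The edges decompose into `b`
forests: the `c` stars centred at the vertices of `S`, and the `c` classes of Walecki's
decomposition of `K_{2c}` into zigzag Hamiltonian paths (the edge `ab` of a copy goes to the
class `⌊((a + b) mod 2c) / 2⌋`), each class taken in all copies at once. A graph is a forest as
soon as its vertices can be ranked so that each vertex has at most one neighbour of smaller or
equal rank: on a cycle, the vertex of largest rank would have two.
-/

open Finset SimpleGraph

/-- The position of `p` on the zigzag path `i, i+1, i-1, i+2, i-2, …, i+c` (mod `2c`); the
truncated subtraction `2 * 0 - 1 = 0` gives `i` itself rank `0`. -/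
def zigzagRank (c i p : ℕ) : ℕ :=
  let d := if i ≤ p then p - i else p + 2 * c - i
  if d ≤ c then 2 * d - 1 else 2 * (2 * c - d)

theorem zigzagRank_inj {c i p q : ℕ} (hi : i < c) (hp : p < 2 * c) (hq : q < 2 * c)
    (h : zigzagRank c i p = zigzagRank c i q) : p = q := by
  simp only [zigzagRank] at h
  split_ifs at h <;> omega

theorem zigzagRank_adj {c i p q : ℕ} (hi : i < c) (hp : p < 2 * c) (hq : q < 2 * c)
    (hpq : p ≠ q) (hs : (p + q) % (2 * c) / 2 = i) :
    zigzagRank c i p = zigzagRank c i q + 1 ∨ zigzagRank c i q = zigzagRank c i p + 1 := by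
  have hsum : p + q = 2 * i ∨ p + q = 2 * i + 1 ∨ p + q = 2 * c + 2 * i ∨
      p + q = 2 * c + 2 * i + 1 := by
    rcases lt_or_ge (p + q) (2 * c) with h | h
    · rw [Nat.mod_eq_of_lt h] at hs
      omega
    · rw [Nat.mod_eq_sub_mod h, Nat.mod_eq_of_lt (by omega)] at hs
      omega
  simp only [zigzagRank]
  split_ifs <;> omega

/-- The edges of colour `i` form the zigzag path ranked by `zigzagRank c i`. -/
def zigzagColor (c : ℕ) (a b : Fin (2 * c)) : Fin c :=
  ⟨(a + b).val / 2, Nat.div_lt_of_lt_mul (a + b).isLt⟩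

theorem zigzagColor_comm (c : ℕ) (a b : Fin (2 * c)) :
    zigzagColor c a b = zigzagColor c b a := by
  simp only [zigzagColor, add_comm]

theorem eq_of_zigzagColor_of_zigzagRank_le {c : ℕ} {i : Fin c} {a u w : Fin (2 * c)}
    (hu : a ≠ u) (hw : a ≠ w) (hau : zigzagColor c a u = i) (haw : zigzagColor c a w = i)
    (hru : zigzagRank c i u ≤ zigzagRank c i a) (hrw : zigzagRank c i w ≤ zigzagRank c i a) :
    u = w := by
  have lower : ∀ {v : Fin (2 * c)}, a ≠ v → zigzagColor c a v = i →
      zigzagRank c i v ≤ zigzagRank c i a → zigzagRank c i a = zigzagRank c i v + 1 := by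
    intro v hv hav hrv
    have := zigzagRank_adj i.2 a.2 v.2 (Fin.val_ne_of_ne hv) (by subst hav; rfl)
    omega
  have hu' := lower hu hau hru
  have hw' := lower hw haw hrw
  exact Fin.ext (zigzagRank_inj i.2 u.2 w.2 (by omega))

namespace SimpleGraph

variable {V W ι κ : Type*} {G : SimpleGraph V}

theorem isAcyclic_of_unique_lower_neighbor {α : Type*} [LinearOrder α] (r : V → α)
    (h : ∀ ⦃x u w⦄, G.Adj x u → G.Adj x w → r u ≤ r x → r w ≤ r x → u = w) :
    G.IsAcyclic := by
  classical
  intro v c hc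
  obtain ⟨x, hx, hmax⟩ := c.support.toFinset.exists_max_image r ⟨v, by simp⟩
  rw [List.mem_toFinset] at hx
  set c' := c.rotate x hx
  have hc' : c'.IsCycle := hc.rotate hx
  have hle : ∀ i, r (c'.getVert i) ≤ r x := fun i => hmax _ <|
    List.mem_toFinset.mpr ((c.mem_support_rotate_iff x hx).mp (c'.getVert_mem_support i))
  exact hc'.snd_ne_penultimate <|
    h (c'.adj_snd hc'.not_nil) (c'.adj_penultimate hc'.not_nil).symm (hle 1) (hle _)

def HasForestPartition (G : SimpleGraph V) (ι : Type*) : Prop :=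
  ∃ F : ι → Set (Sym2 V), Pairwise (Function.onFun Disjoint F) ∧ ⋃ i, F i = G.edgeSet ∧
    ∀ i, (fromEdgeSet (F i)).IsAcyclic

theorem HasForestPartition.reindex (h : G.HasForestPartition ι) (e : ι ≃ κ) :
    G.HasForestPartition κ := by
  obtain ⟨F, hdisj, hunion, hacyc⟩ := h
  refine ⟨F ∘ e.symm, fun i j hij => hdisj (e.symm.injective.ne hij), ?_, fun i => hacyc _⟩
  rw [← hunion]
  exact e.symm.surjective.iUnion_comp F

theorem HasForestPartition.map (h : G.HasForestPartition ι) (e : V ≃ W) :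
    (G.map e).HasForestPartition ι := by
  obtain ⟨F, hdisj, hunion, hacyc⟩ := h
  refine ⟨fun i => Sym2.map e '' F i, fun i j hij => ?_, ?_, fun i => ?_⟩
  · exact (Set.disjoint_image_iff (Sym2.map.injective e.injective)).mpr (hdisj hij)
  · rw [← e.coe_toEmbedding, edgeSet_map, ← hunion, Set.image_iUnion]
    rfl
  · refine (hacyc i).comap ⟨e.symm, fun {x y} hxy => ?_⟩ e.symm.injective
    simp only [fromEdgeSet_adj, Set.mem_image] at hxy ⊢
    obtain ⟨⟨z, hz, hzxy⟩, hne⟩ := hxy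
    refine ⟨?_, e.symm.injective.ne hne⟩
    convert hz
    rw [← Sym2.map_mk, ← hzxy, Sym2.map_map]
    simp

/-- Asking for the colour in both orientations makes the class symmetric for any `col`. -/
def colorClass (G : SimpleGraph V) (col : V → V → ι) (i : ι) : SimpleGraph V where
  Adj x y := G.Adj x y ∧ col x y = i ∧ col y x = i
  symm := ⟨fun _ _ h => ⟨h.1.symm, h.2.2, h.2.1⟩⟩
  loopless := ⟨fun x h => G.loopless.irrefl x h.1⟩

theorem hasForestPartition_of_coloring (col : V → V → ι)
    (hcol : ∀ ⦃x y⦄, G.Adj x y → col x y = col y x)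
    (hacyc : ∀ i, (G.colorClass col i).IsAcyclic) : G.HasForestPartition ι := by
  refine ⟨fun i => (G.colorClass col i).edgeSet, fun i j hij => ?_, ?_, fun i => ?_⟩
  · rw [Function.onFun, disjoint_edgeSet, disjoint_iff_inf_le]
    rintro x y ⟨⟨-, hi, -⟩, ⟨-, hj, -⟩⟩
    exact hij (hi.symm.trans hj)
  · ext e
    induction e with
    | h x y =>
      simp only [Set.mem_iUnion, mem_edgeSet, colorClass]
      exact ⟨fun ⟨_, h, _⟩ => h, fun h => ⟨_, h, rfl, (hcol h).symm⟩⟩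
  · rw [fromEdgeSet_edgeSet]
    exact hacyc i

def blockJoin (ι α β : Type*) : SimpleGraph (ι × α ⊕ β) where
  Adj
    | .inl p, .inl q => p.1 = q.1 ∧ p.2 ≠ q.2
    | .inl _, .inr _ => True
    | .inr _, .inl _ => True
    | .inr _, .inr _ => False
  symm.symm
    | .inl _, .inl _ => fun h => ⟨h.1.symm, h.2.symm⟩
    | .inl _, .inr _ | .inr _, .inl _ | .inr _, .inr _ => id
  loopless.irrefl
    | .inl _ => fun h => h.2 rfl
    | .inr _ => id

variable {α β : Type*}

@[simp] theorem blockJoin_adj_inl_inl {p q : ι × α} :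
    (blockJoin ι α β).Adj (.inl p) (.inl q) ↔ p.1 = q.1 ∧ p.2 ≠ q.2 := Iff.rfl

@[simp] theorem blockJoin_adj_inl_inr {p : ι × α} {x : β} :
    (blockJoin ι α β).Adj (.inl p) (.inr x) := trivial

@[simp] theorem blockJoin_adj_inr_inl {p : ι × α} {x : β} :
    (blockJoin ι α β).Adj (.inr x) (.inl p) := trivial

@[simp] theorem blockJoin_not_adj_inr_inr {x y : β} :
    ¬ (blockJoin ι α β).Adj (.inr x) (.inr y) := id

def blockJoinColor (c : ℕ) : ι × Fin (2 * c) ⊕ β → ι × Fin (2 * c) ⊕ β → Fin c ⊕ β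
  | .inl p, .inl q => .inl (zigzagColor c p.2 q.2)
  | .inl _, .inr x => .inr x
  | .inr x, _ => .inr x

theorem blockJoinColor_comm (c : ℕ) {v w : ι × Fin (2 * c) ⊕ β}
    (h : (blockJoin ι (Fin (2 * c)) β).Adj v w) :
    blockJoinColor c v w = blockJoinColor c w v := by
  rcases v with p | x <;> rcases w with q | y
  · simp [blockJoinColor, zigzagColor_comm]
  · rfl
  · rfl
  · exact absurd h id

theorem isAcyclic_colorClass_blockJoin (c : ℕ) (i : Fin c ⊕ β) :
    ((blockJoin ι (Fin (2 * c)) β).colorClass (blockJoinColor c) i).IsAcyclic := by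
  rcases i with i | x
  · refine isAcyclic_of_unique_lower_neighbor
      (Sum.elim (fun p => zigzagRank c i p.2) (fun _ => 0)) ?_
    rintro (⟨j, a⟩ | _) (⟨j₁, a₁⟩ | _) (⟨j₂, a₂⟩ | _) ⟨h₁, hc₁, -⟩ ⟨h₂, hc₂, -⟩ hr₁ hr₂
    · obtain ⟨rfl, ha₁⟩ : j = j₁ ∧ a ≠ a₁ := h₁
      obtain ⟨rfl, ha₂⟩ : j = j₂ ∧ a ≠ a₂ := h₂
      simp only [blockJoinColor, Sum.inl.injEq] at hc₁ hc₂
      rw [eq_of_zigzagColor_of_zigzagRank_le ha₁ ha₂ hc₁ hc₂ hr₁ hr₂]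
    all_goals simp_all [blockJoinColor]
  · refine isAcyclic_of_unique_lower_neighbor (Sum.elim (fun _ => 1) (fun _ => 0)) ?_
    rintro (_ | _) (_ | _) (_ | _) ⟨h₁, hc₁, -⟩ ⟨h₂, hc₂, -⟩ hr₁ hr₂ <;>
      simp_all [blockJoinColor]

theorem hasForestPartition_blockJoin (c : ℕ) :
    (blockJoin ι (Fin (2 * c)) β).HasForestPartition (Fin c ⊕ β) :=
  hasForestPartition_of_coloring _ (fun _ _ => blockJoinColor_comm c)
    (isAcyclic_colorClass_blockJoin c)

section Edges

variable [DecidableEq ι] [DecidableEq α]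

instance : DecidableRel (blockJoin ι α β).Adj
  | .inl p, .inl q => inferInstanceAs (Decidable (p.1 = q.1 ∧ p.2 ≠ q.2))
  | .inl _, .inr _ => .isTrue trivial
  | .inr _, .inl _ => .isTrue trivial
  | .inr _, .inr _ => .isFalse id

variable [Fintype ι] [Fintype α] [Fintype β]

theorem degree_blockJoin_inl (p : ι × α) :
    (blockJoin ι α β).degree (.inl p) = (Fintype.card α - 1) + Fintype.card β := by
  have : (blockJoin ι α β).neighborFinset (.inl p) =
      (({p.1} : Finset ι) ×ˢ (univ.erase p.2)).disjSum univ := by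
    ext (q | x)
    · simp [Prod.ext_iff, eq_comm]
      tauto
    · simp
  rw [← card_neighborFinset_eq_degree, this, card_disjSum, card_product,
    card_erase_of_mem (mem_univ _)]
  simp

theorem degree_blockJoin_inr (x : β) :
    (blockJoin ι α β).degree (.inr x) = Fintype.card ι * Fintype.card α := by
  have : (blockJoin ι α β).neighborFinset (.inr x) = univ.disjSum ∅ := by
    ext (q | y) <;> simp
  rw [← card_neighborFinset_eq_degree, this, card_disjSum]
  simp

theorem card_edgeFinset_blockJoin :
    #(blockJoin ι α β).edgeFinset = Fintype.card ι * (Fintype.card α).choose 2 +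
      Fintype.card ι * Fintype.card α * Fintype.card β := by
  have h := sum_degrees_eq_twice_card_edges (blockJoin ι α β)
  simp only [Fintype.sum_sum_type, degree_blockJoin_inl, degree_blockJoin_inr, sum_const,
    card_univ, Fintype.card_prod, smul_eq_mul] at h
  have hc : 2 * (Fintype.card α).choose 2 = Fintype.card α * (Fintype.card α - 1) := by
    rw [Nat.choose_two_right, Nat.mul_div_cancel' (Nat.even_mul_pred_self _).two_dvd]
  nlinarith

end Edges

section Cliques

def blockEmbedding (i : ι) : α ↪ ι × α ⊕ β :=
  (Function.Embedding.sectR i α).trans Function.Embedding.inl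

theorem isNClique_map_blockEmbedding (i : ι) (s : Finset α) :
    (blockJoin ι α β).IsNClique #s (s.map (blockEmbedding i)) := by
  refine ⟨?_, card_map _⟩
  simp [IsClique, Set.Pairwise, blockEmbedding]

theorem inr_notMem_map_blockEmbedding (i : ι) (s : Finset α) (x : β) :
    Sum.inr x ∉ s.map (blockEmbedding i) := by
  simp [blockEmbedding]

theorem eq_of_map_blockEmbedding_eq {i j : ι} {s t : Finset α} (hs : s.Nonempty)
    (h : s.map (blockEmbedding (β := β) i) = t.map (blockEmbedding j)) : i = j ∧ s = t := by
  obtain ⟨a, ha⟩ := hs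
  obtain ⟨a', -, ha'⟩ := mem_map.mp (h ▸ mem_map_of_mem (blockEmbedding (β := β) i) ha)
  obtain rfl : j = i := (Prod.ext_iff.mp (Sum.inl_injective ha')).1
  exact ⟨rfl, Finset.map_injective _ h⟩

variable [DecidableEq ι] [DecidableEq α] [DecidableEq β]

theorem isNClique_insert_map_blockEmbedding (i : ι) (s : Finset α) (x : β) :
    (blockJoin ι α β).IsNClique (#s + 1) (insert (Sum.inr x) (s.map (blockEmbedding i))) := by
  refine ⟨?_, by rw [card_insert_of_notMem (inr_notMem_map_blockEmbedding i s x), card_map]⟩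
  simp [IsClique, Set.Pairwise, blockEmbedding]

variable [Fintype ι] [Fintype α] [Fintype β]

theorem le_card_cliqueFinset_blockJoin {ℓ : ℕ} (hℓ : 2 ≤ ℓ) :
    Fintype.card ι * (Fintype.card α).choose ℓ +
        Fintype.card ι * Fintype.card β * (Fintype.card α).choose (ℓ - 1) ≤
      #((blockJoin ι α β).cliqueFinset ℓ) := by
  let f : (ι × Finset α) ⊕ ((ι × β) × Finset α) → Finset (ι × α ⊕ β) :=
    Sum.elim (fun p => p.2.map (blockEmbedding p.1))
      (fun q => insert (Sum.inr q.1.2) (q.2.map (blockEmbedding q.1.1)))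
  let D : Finset ((ι × Finset α) ⊕ ((ι × β) × Finset α)) :=
    (univ ×ˢ powersetCard ℓ univ).disjSum (univ ×ˢ powersetCard (ℓ - 1) univ)
  have hD : #D = Fintype.card ι * (Fintype.card α).choose ℓ +
      Fintype.card ι * Fintype.card β * (Fintype.card α).choose (ℓ - 1) := by
    simp [D, card_disjSum, card_product, card_powersetCard]
  rw [← hD]
  refine card_le_card_of_injOn f ?_ ?_
  · rintro (⟨i, s⟩ | ⟨⟨i, x⟩, t⟩) h <;>
      simp only [D, mem_coe, inl_mem_disjSum, inr_mem_disjSum, mem_product, mem_univ,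
        mem_powersetCard, subset_univ, true_and] at h <;>
      rw [mem_coe, mem_cliqueFinset_iff]
    · exact h ▸ isNClique_map_blockEmbedding i s
    · rw [show ℓ = #t + 1 by omega]
      exact isNClique_insert_map_blockEmbedding i t x
  · rintro (⟨i, s⟩ | ⟨⟨i, x⟩, t⟩) hp (⟨j, s'⟩ | ⟨⟨j, y⟩, t'⟩) hq heq <;>
      simp only [D, mem_coe, inl_mem_disjSum, inr_mem_disjSum, mem_product, mem_univ,
        mem_powersetCard, subset_univ, true_and] at hp hq <;>
      simp only [f, Sum.elim_inl, Sum.elim_inr] at heq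
    · obtain ⟨rfl, rfl⟩ := eq_of_map_blockEmbedding_eq (card_pos.mp (by omega)) heq
      rfl
    · exact absurd (heq ▸ mem_insert_self _ _) (inr_notMem_map_blockEmbedding _ _ _)
    · exact absurd (heq.symm ▸ mem_insert_self _ _) (inr_notMem_map_blockEmbedding _ _ _)
    · obtain rfl : x = y := by
        have := heq ▸ mem_insert_self (Sum.inr x) (t.map (blockEmbedding i))
        simpa [blockEmbedding] using this
      have := congrArg (·.erase (Sum.inr x)) heq
      simp only [erase_insert (inr_notMem_map_blockEmbedding _ _ _)] at this
      obtain ⟨rfl, rfl⟩ := eq_of_map_blockEmbedding_eq (card_pos.mp (by omega)) this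
      rfl

end Cliques

end SimpleGraph

theorem exists_graph_arboricity_many_cliques_general (ℓ k b : ℕ) (hl : 3 ≤ ℓ)
    (hbe : 2 ∣ b) :
    ∃ G : SimpleGraph (Fin ((2 * k + 1) * b / 2)),
      G.edgeSet.ncard = k * b.choose 2 + k * (b ^ 2 / 2) ∧
      (∃ F : Fin b → Set (Sym2 (Fin ((2 * k + 1) * b / 2))),
        Pairwise (Function.onFun Disjoint F) ∧
        ⋃ i, F i = G.edgeSet ∧
        ∀ i, (SimpleGraph.fromEdgeSet (F i)).IsAcyclic) ∧
      k * b.choose ℓ + k * b.choose (ℓ - 1) * (b / 2) ≤ (G.cliqueSet ℓ).ncard := by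
  obtain ⟨c, rfl⟩ := hbe
  have hn : Fintype.card (Fin k × Fin (2 * c) ⊕ Fin c) = (2 * k + 1) * (2 * c) / 2 := by
    rw [Fintype.card_sum, Fintype.card_prod, Fintype.card_fin, Fintype.card_fin,
      Fintype.card_fin, show (2 * k + 1) * (2 * c) = 2 * (k * (2 * c) + c) by ring,
      Nat.mul_div_cancel_left _ two_pos]
  have hc : 2 * c / 2 = c := Nat.mul_div_cancel_left _ two_pos
  have hsq : (2 * c) ^ 2 / 2 = c * (2 * c) := by
    rw [sq, mul_assoc, Nat.mul_div_cancel_left _ two_pos]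
  let e := Fintype.equivFinOfCardEq hn
  refine ⟨(blockJoin (Fin k) (Fin (2 * c)) (Fin c)).map e, ?_, ?_, ?_⟩
  · rw [← e.coe_toEmbedding, edgeSet_map,
      Set.ncard_image_of_injective _ (Function.Embedding.injective _), ← coe_edgeFinset, Set.ncard_coe_finset, card_edgeFinset_blockJoin]
    simp only [Fintype.card_fin, hsq]
    ring
  · exact ((hasForestPartition_blockJoin c).map e).reindex
      (finSumFinEquiv.trans (finCongr (two_mul c).symm))
  · rw [cliqueSet_map_of_equiv, Set.ncard_image_of_injective _ (Finset.map_injective _),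
      ← coe_cliqueFinset, Set.ncard_coe_finset]
    refine le_trans (le_of_eq ?_) (le_card_cliqueFinset_blockJoin (by omega))
    simp only [Fintype.card_fin, hc]
    ring

/-- For every fixed `ℓ ≥ 3`, every `k ≥ 1` and every even `b ≥ ℓ`, there is a simple graph
on `(2k+1)·b/2` vertices with exactly `k·C(b,2) + k·b²/2` edges whose edge set partitions
into at most `b` forests and which has at least `k·C(b,ℓ) + k·C(b,ℓ-1)·(b/2)` copies
of `K_ℓ`. -/
theorem exists_graph_arboricity_many_cliques (ℓ k b : ℕ) (hl : 3 ≤ ℓ) (hk : 1 ≤ k)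
    (hb : ℓ ≤ b) (hbe : 2 ∣ b) :
    ∃ G : SimpleGraph (Fin ((2 * k + 1) * b / 2)),
      G.edgeSet.ncard = k * b.choose 2 + k * (b ^ 2 / 2) ∧
      (∃ F : Fin b → Set (Sym2 (Fin ((2 * k + 1) * b / 2))),
        Pairwise (Function.onFun Disjoint F) ∧
        ⋃ i, F i = G.edgeSet ∧
        ∀ i, (SimpleGraph.fromEdgeSet (F i)).IsAcyclic) ∧
      k * b.choose ℓ + k * b.choose (ℓ - 1) * (b / 2) ≤ (G.cliqueSet ℓ).ncard :=
  exists_graph_arboricity_many_cliques_general ℓ k b hl hbe
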